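/- arXiv:2101.12638 — 7 statements merged into one kernel-verified Lean document; each statement's English description precedes it below -/
import Mathlib

section
/- Given f_1, f_2 ∈ 𝔻 with Φ_2(z) = (z - f_1)(z - f_2) and Φ_2*(z) = (1 - conj(f_1)z)(1 - conj(f_2)z), the point f_3 = (f_1 + f_2 - f_2|f_1|² - f_1|f_2|²)/(1 - |f_1 f_2|²) lies in the open unit disk 𝔻. -/
/-!
Writing `a = |f₁|`, `b = |f₂|`, the numerator is `(1 - b²) f₁ + (1 - a²) f₂`, so by the triangle
inequality its modulus is at most `a (1 - b²) + b (1 - a²)`, while the denominator is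
`1 - a²b²`. The gap `1 - a²b² - a (1 - b²) - b (1 - a²) = (1 - a)(1 - b)(1 - ab)` is positive.
-/

open Complex

lemma mul_one_sub_sq_add_mul_one_sub_sq_lt {a b : ℝ} (ha : a < 1) (hb : b < 1) (hab : a * b < 1) :
    a * (1 - b ^ 2) + b * (1 - a ^ 2) < 1 - a ^ 2 * b ^ 2 := by
  have hgap : 1 - a ^ 2 * b ^ 2 - (a * (1 - b ^ 2) + b * (1 - a ^ 2))
      = (1 - a) * (1 - b) * (1 - a * b) := by ring
  have : 0 < (1 - a) * (1 - b) * (1 - a * b) := by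
    apply mul_pos (mul_pos _ _) <;> linarith
  linarith

lemma norm_one_sub_sq_smul_add_lt {E : Type*} [SeminormedAddCommGroup E] [NormedSpace ℝ E]
    {x y : E} (hx : ‖x‖ < 1) (hy : ‖y‖ < 1) :
    ‖(1 - ‖y‖ ^ 2) • x + (1 - ‖x‖ ^ 2) • y‖ < 1 - ‖x‖ ^ 2 * ‖y‖ ^ 2 := by
  have hx0 := norm_nonneg x
  have hy0 := norm_nonneg y
  have hcx : 0 ≤ 1 - ‖x‖ ^ 2 := by nlinarith
  have hcy : 0 ≤ 1 - ‖y‖ ^ 2 := by nlinarith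
  calc ‖(1 - ‖y‖ ^ 2) • x + (1 - ‖x‖ ^ 2) • y‖
      ≤ ‖x‖ * (1 - ‖y‖ ^ 2) + ‖y‖ * (1 - ‖x‖ ^ 2) := by
        refine (norm_add_le _ _).trans_eq ?_
        rw [norm_smul, norm_smul, Real.norm_of_nonneg hcx, Real.norm_of_nonneg hcy]
        ring
    _ < 1 - ‖x‖ ^ 2 * ‖y‖ ^ 2 :=
        mul_one_sub_sq_add_mul_one_sub_sq_lt hx hy (by nlinarith)

theorem stmt_2 (f1 f2 : ℂ) (h1 : ‖f1‖ < 1) (h2 : ‖f2‖ < 1) :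
    ‖(f1 + f2 - f2 * (‖f1‖ : ℂ) ^ 2 - f1 * (‖f2‖ : ℂ) ^ 2) /
      (1 - (‖f1 * f2‖ : ℂ) ^ 2)‖ < 1 := by
  have hnum : f1 + f2 - f2 * (‖f1‖ : ℂ) ^ 2 - f1 * (‖f2‖ : ℂ) ^ 2
      = (1 - ‖f2‖ ^ 2) • f1 + (1 - ‖f1‖ ^ 2) • f2 := by
    simp only [real_smul]
    push_cast
    ring
  have hden : (1 : ℂ) - (‖f1 * f2‖ : ℂ) ^ 2 = ((1 - ‖f1‖ ^ 2 * ‖f2‖ ^ 2 : ℝ) : ℂ) := by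
    push_cast [norm_mul]
    ring
  have hlt := norm_one_sub_sq_smul_add_lt h1 h2
  have hpos : 0 < 1 - ‖f1‖ ^ 2 * ‖f2‖ ^ 2 := (norm_nonneg _).trans_lt hlt
  rw [hnum, hden, norm_div, norm_real, Real.norm_of_nonneg hpos.le, div_lt_one hpos]
  exact hlt
end

section
/- Let f_1, f_2 ∈ 𝔻 and define f_3 = (f_1 + f_2 - f_2|f_1|² - f_1|f_2|²)/(1 - |f_1 f_2|²). Then f_3 satisfies the Mirman equation f_1·f_2 = (f_3 - f_1)(f_3 - f_2)/((1 - conj(f_1)f_3)(1 - conj(f_2)f_3)). -/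
/-! With `‖f‖² = f * conj f` the claim is a rational identity in `a = f1`, `b = f2`, `c = conj f1`,
`d = conj f2`: over the common denominator `1 - a c b d`, each of `x - a`, `x - b`, `1 - c x`, `1 - d x`
factors into the linear forms `1 - a c`, `1 - a d`, `1 - b c`, `1 - b d`, and these cancel to leave `a b`.
All of them are nonzero because they have the form `1 - z * conj w` with `z, w` in the disk. -/

open Complex ComplexConjugate

theorem mirman_identity {K : Type*} [Field K] {a b c d x : K}
    (hD : 1 - a * c * (b * d) ≠ 0) (hac : 1 - a * c ≠ 0) (had : 1 - a * d ≠ 0)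
    (hbc : 1 - b * c ≠ 0) (hbd : 1 - b * d ≠ 0)
    (hx : x = (a + b - b * (a * c) - a * (b * d)) / (1 - a * c * (b * d))) :
    a * b = (x - a) * (x - b) / ((1 - c * x) * (1 - d * x)) := by
  have hxD : x * (1 - a * c * (b * d)) = a + b - b * (a * c) - a * (b * d) :=
    (eq_div_iff hD).mp hx
  have hxa : x - a = b * (1 - a * c) * (1 - a * d) / (1 - a * c * (b * d)) := by
    rw [eq_div_iff hD]; linear_combination hxD
  have hxb : x - b = a * (1 - b * c) * (1 - b * d) / (1 - a * c * (b * d)) := by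
    rw [eq_div_iff hD]; linear_combination hxD
  have hcx : 1 - c * x = (1 - a * c) * (1 - b * c) / (1 - a * c * (b * d)) := by
    rw [eq_div_iff hD]; linear_combination (-c) * hxD
  have hdx : 1 - d * x = (1 - a * d) * (1 - b * d) / (1 - a * c * (b * d)) := by
    rw [eq_div_iff hD]; linear_combination (-d) * hxD
  rw [hxa, hxb, hcx, hdx, div_mul_div_comm, div_mul_div_comm,
    div_div_div_cancel_right₀ (mul_ne_zero hD hD),
    eq_div_iff (mul_ne_zero (mul_ne_zero hac hbc) (mul_ne_zero had hbd))]
  ring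

theorem one_sub_ne_zero_of_norm_lt_one {R : Type*} [NormedRing R] [NormOneClass R] {x : R}
    (hx : ‖x‖ < 1) : 1 - x ≠ 0 := by
  rw [sub_ne_zero]
  rintro rfl
  simp at hx

theorem stmt_3 (f1 f2 : ℂ) (h1 : ‖f1‖ < 1) (h2 : ‖f2‖ < 1) :
    let f3 : ℂ := (f1 + f2 - f2 * (‖f1‖ : ℂ) ^ 2 - f1 * (‖f2‖ : ℂ) ^ 2) /
      (1 - (‖f1 * f2‖ : ℂ) ^ 2)
    f1 * f2 = (f3 - f1) * (f3 - f2) /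
      ((1 - (starRingEnd ℂ) f1 * f3) * (1 - (starRingEnd ℂ) f2 * f3)) := by
  have hmul {z w : ℂ} (hz : ‖z‖ < 1) (hw : ‖w‖ < 1) : ‖z * w‖ < 1 := by
    rw [norm_mul]; exact mul_lt_one_of_nonneg_of_lt_one_left (norm_nonneg z) hz hw.le
  have hne {z w : ℂ} (hz : ‖z‖ < 1) (hw : ‖w‖ < 1) : 1 - z * conj w ≠ 0 :=
    one_sub_ne_zero_of_norm_lt_one (hmul hz (by rwa [norm_conj]))
  refine mirman_identity ?_ (hne h1 h1) (hne h1 h2) (hne h2 h1) (hne h2 h2) ?_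
  · convert hne (hmul h1 h2) (hmul h1 h2) using 2
    rw [map_mul]; ring
  · simp only [norm_mul, ofReal_mul, mul_pow, ← mul_conj']
end

section
/- Given f_1, f_2 ∈ 𝔻, set conj(b) = f_1(f_1 - f_2)/(1 - conj(f_2) f_1). Then |b| < 1 and the polynomial Φ_2(z) = z(z - f_2) - conj(b)·(1 - conj(f_2)z) vanishes at z = f_1. -/
/-! The Möbius map `z ↦ (z - w) / (1 - conj w * z)` sends the unit disk into itself, because
`|1 - w̄ z|² - |z - w|² = (1 - |z|²)(1 - |w|²)`. Hence `b̄ = f₁ · φ_{f₂}(f₁)` is a product of two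
points of the disk, and clearing the denominator gives `Φ₂(f₁) = 0`. -/

open Complex ComplexConjugate

theorem Complex.normSq_one_sub_conj_mul_sub_normSq_sub (z w : ℂ) :
    normSq (1 - conj w * z) - normSq (z - w) = (1 - normSq z) * (1 - normSq w) := by
  simp only [normSq_apply, sub_re, sub_im, mul_re, mul_im, conj_re, conj_im, one_re, one_im]
  ring

theorem Complex.norm_sub_lt_norm_one_sub_conj_mul {z w : ℂ} (hz : ‖z‖ < 1) (hw : ‖w‖ < 1) :
    ‖z - w‖ < ‖1 - conj w * z‖ := by
  have hz' : normSq z < 1 := by rw [normSq_eq_norm_sq]; nlinarith [norm_nonneg z]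
  have hw' : normSq w < 1 := by rw [normSq_eq_norm_sq]; nlinarith [norm_nonneg w]
  have hsq : normSq (z - w) < normSq (1 - conj w * z) := by
    have := normSq_one_sub_conj_mul_sub_normSq_sub z w
    nlinarith [mul_pos (sub_pos.2 hz') (sub_pos.2 hw')]
  rw [normSq_eq_norm_sq, normSq_eq_norm_sq] at hsq
  exact lt_of_pow_lt_pow_left₀ 2 (norm_nonneg _) hsq

theorem Complex.norm_mobius_lt_one {z w : ℂ} (hz : ‖z‖ < 1) (hw : ‖w‖ < 1) :
    ‖(z - w) / (1 - conj w * z)‖ < 1 := by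
  have h := norm_sub_lt_norm_one_sub_conj_mul hz hw
  rw [norm_div, div_lt_one ((norm_nonneg _).trans_lt h)]
  exact h

theorem Complex.one_sub_conj_mul_ne_zero {z w : ℂ} (hz : ‖z‖ < 1) (hw : ‖w‖ < 1) :
    1 - conj w * z ≠ 0 :=
  norm_pos_iff.1 ((norm_nonneg _).trans_lt (norm_sub_lt_norm_one_sub_conj_mul hz hw))

theorem stmt_6 (f1 f2 b : ℂ) (h1 : ‖f1‖ < 1) (h2 : ‖f2‖ < 1)
    (hb : (starRingEnd ℂ) b = f1 * (f1 - f2) / (1 - (starRingEnd ℂ) f2 * f1)) :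
    ‖b‖ < 1 ∧
    f1 * (f1 - f2) - (starRingEnd ℂ) b * (1 - (starRingEnd ℂ) f2 * f1) = 0 := by
  constructor
  · have hb' : ‖b‖ = ‖f1‖ * ‖(f1 - f2) / (1 - conj f2 * f1)‖ := by
      rw [← norm_conj, hb, mul_div_assoc, norm_mul]
    rw [hb']
    exact mul_lt_one_of_nonneg_of_lt_one_left (norm_nonneg _) h1 (norm_mobius_lt_one h1 h2).le
  · rw [hb, div_mul_cancel₀ _ (one_sub_conj_mul_ne_zero h1 h2), sub_self]
end

section
/- Szegő recursion preserves zeros in the disk: if Φ_{k}(z) is a monic polynomial of degree k with all zeros in 𝔻, α ∈ 𝔻, and Φ_{k+1}(z) = zΦ_k(z) - conj(α)Φ_k*(z) where Φ_k*(z) = z^k conj(Φ_k(1/conj(z))), then all zeros of Φ_{k+1} lie in 𝔻. -/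
/-!
Write `Φ(w) = ∏ (w - r j)` and `Φ*(w) = ∏ (1 - conj (r j) * w)`. For `|a| ≤ 1`,
`|w - a|² - |1 - ā w|² = (|w|² - 1)(1 - |a|²)`, so `|Φ*(w)| ≤ |Φ(w)|` whenever `|w| ≥ 1`.
At a zero `w` of `w Φ(w) - ᾱ Φ*(w)` with `|w| ≥ 1` this gives
`|Φ(w)| ≤ |w Φ(w)| = |α| |Φ*(w)| ≤ |α| |Φ(w)|`, forcing `Φ(w) = 0`, i.e. `w` is one of the
zeros `r j`, which lie in the disk.
-/

open Complex Finset ComplexConjugate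

namespace Complex

theorem normSq_sub_sub_normSq_one_sub_conj_mul (a w : ℂ) :
    normSq (w - a) - normSq (1 - conj a * w) = (normSq w - 1) * (1 - normSq a) := by
  simp only [normSq_apply, sub_re, sub_im, mul_re, mul_im, one_re, one_im, conj_re, conj_im]
  ring

theorem norm_one_sub_conj_mul_le_norm_sub {a w : ℂ} (ha : ‖a‖ ≤ 1) (hw : 1 ≤ ‖w‖) :
    ‖1 - conj a * w‖ ≤ ‖w - a‖ := by
  have hdiff := normSq_sub_sub_normSq_one_sub_conj_mul a w
  simp only [normSq_eq_norm_sq] at hdiff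
  have hsq : ‖1 - conj a * w‖ ^ 2 ≤ ‖w - a‖ ^ 2 := by
    nlinarith [mul_nonneg (sub_nonneg.2 (one_le_pow₀ (n := 2) hw))
      (sub_nonneg.2 (pow_le_one₀ (n := 2) (norm_nonneg a) ha))]
  exact (sq_le_sq₀ (norm_nonneg _) (norm_nonneg _)).1 hsq

theorem norm_prod_one_sub_conj_mul_le {ι : Type*} (s : Finset ι) (r : ι → ℂ)
    (hr : ∀ j ∈ s, ‖r j‖ ≤ 1) {w : ℂ} (hw : 1 ≤ ‖w‖) :
    ‖∏ j ∈ s, (1 - conj (r j) * w)‖ ≤ ‖∏ j ∈ s, (w - r j)‖ := by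
  rw [norm_prod, norm_prod]
  exact prod_le_prod (fun _ _ ↦ norm_nonneg _)
    fun j hj ↦ norm_one_sub_conj_mul_le_norm_sub (hr j hj) hw

end Complex

theorem stmt_7 (k : ℕ) (r : Fin k → ℂ) (hr : ∀ j, ‖r j‖ < 1)
    (α : ℂ) (hα : ‖α‖ < 1) (w : ℂ)
    (hw : w * (∏ j, (w - r j)) - (starRingEnd ℂ) α * (∏ j, (1 - (starRingEnd ℂ) (r j) * w)) = 0) :
    ‖w‖ < 1 := by
  by_contra! hw1
  set Φ := ∏ j, (w - r j)
  have hrecur : w * Φ = conj α * ∏ j, (1 - conj (r j) * w) := sub_eq_zero.1 hw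
  have hbound : ‖Φ‖ ≤ ‖α‖ * ‖Φ‖ :=
    calc ‖Φ‖ ≤ ‖w‖ * ‖Φ‖ := le_mul_of_one_le_left (norm_nonneg _) hw1
      _ = ‖α‖ * ‖∏ j, (1 - conj (r j) * w)‖ := by rw [← norm_mul, hrecur, norm_mul, norm_conj]
      _ ≤ ‖α‖ * ‖Φ‖ := by
        gcongr
        exact norm_prod_one_sub_conj_mul_le _ r (fun j _ ↦ (hr j).le) hw1
  have hΦ : Φ = 0 := norm_eq_zero.1 <| le_antisymm
    (by nlinarith [norm_nonneg Φ]) (norm_nonneg _)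
  obtain ⟨j, -, hj⟩ := prod_eq_zero_iff.1 hΦ
  exact absurd (hr j) (sub_eq_zero.1 hj ▸ hw1.not_gt)
end

section
/- Paraorthogonal polynomials have unimodular zeros: if Φ_{n-1} is a monic polynomial of degree n-1 with all zeros in 𝔻 and λ ∈ 𝕋 (the unit circle), then every zero of the polynomial zΦ_{n-1}(z) - conj(λ)Φ_{n-1}*(z) lies on the unit circle 𝕋. -/
open Complex Finset ComplexConjugate

/-!
Taking absolute values in `w Φ(w) = λ̄ Φ*(w)` gives `|w| ∏ |w - rⱼ| = ∏ |1 - r̄ⱼ w|`. For `|r| < 1` the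
identity `|1 - r̄ w|² - |w - r|² = (1 - |r|²)(1 - |w|²)` shows that each factor on the left is strictly
smaller than the matching factor on the right when `|w| < 1`, and strictly larger when `|w| > 1`;
together with the extra factor `|w|` this makes the two sides differ off the unit circle.
-/

theorem Finset.mul_prod_lt_mul_prod {ι R : Type*} [CommSemiring R] [PartialOrder R]
    [IsStrictOrderedRing R] (s : Finset ι) {a b : ι → R} {c d : R} (hc : 0 ≤ c) (hcd : c < d)
    (ha : ∀ i ∈ s, 0 ≤ a i) (hab : ∀ i ∈ s, a i < b i) :
    c * ∏ i ∈ s, a i < d * ∏ i ∈ s, b i := by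
  have hb : 0 < ∏ i ∈ s, b i := prod_pos fun i hi => (ha i hi).trans_lt (hab i hi)
  calc c * ∏ i ∈ s, a i ≤ c * ∏ i ∈ s, b i :=
        mul_le_mul_of_nonneg_left (prod_le_prod ha fun i hi => (hab i hi).le) hc
    _ < d * ∏ i ∈ s, b i := mul_lt_mul_of_pos_right hcd hb

namespace Complex

theorem norm_one_sub_conj_mul_sq_sub_norm_sub_sq (r w : ℂ) :
    ‖1 - conj r * w‖ ^ 2 - ‖w - r‖ ^ 2 = (1 - ‖r‖ ^ 2) * (1 - ‖w‖ ^ 2) := by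
  simp only [← normSq_eq_norm_sq, normSq_apply, sub_re, sub_im, mul_re, mul_im, conj_re,
    conj_im, one_re, one_im]
  ring

theorem norm_sub_lt_norm_one_sub_conj_mul_s8 {r w : ℂ} (hr : ‖r‖ < 1) (hw : ‖w‖ < 1) :
    ‖w - r‖ < ‖1 - conj r * w‖ := by
  rw [← sq_lt_sq₀ (norm_nonneg _) (norm_nonneg _)]
  have hr' : 0 < 1 - ‖r‖ ^ 2 := by nlinarith [norm_nonneg r]
  have hw' : 0 < 1 - ‖w‖ ^ 2 := by nlinarith [norm_nonneg w]
  linarith [norm_one_sub_conj_mul_sq_sub_norm_sub_sq r w, mul_pos hr' hw']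

theorem norm_one_sub_conj_mul_lt_norm_sub {r w : ℂ} (hr : ‖r‖ < 1) (hw : 1 < ‖w‖) :
    ‖1 - conj r * w‖ < ‖w - r‖ := by
  rw [← sq_lt_sq₀ (norm_nonneg _) (norm_nonneg _)]
  have hr' : 0 < 1 - ‖r‖ ^ 2 := by nlinarith [norm_nonneg r]
  have hw' : 1 - ‖w‖ ^ 2 < 0 := by nlinarith
  linarith [norm_one_sub_conj_mul_sq_sub_norm_sub_sq r w, mul_neg_of_pos_of_neg hr' hw']

end Complex

theorem stmt_8 (n : ℕ) (r : Fin n → ℂ) (hr : ∀ j, ‖r j‖ < 1)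
    (lam : ℂ) (hlam : ‖lam‖ = 1) (w : ℂ)
    (hw : w * (∏ j, (w - r j)) - (starRingEnd ℂ) lam * (∏ j, (1 - (starRingEnd ℂ) (r j) * w)) = 0) :
    ‖w‖ = 1 := by
  have hnorm : ‖w‖ * ∏ j, ‖w - r j‖ = 1 * ∏ j, ‖1 - conj (r j) * w‖ := by
    simpa [norm_prod, hlam] using congrArg (‖·‖) (sub_eq_zero.mp hw)
  rcases lt_trichotomy ‖w‖ 1 with hlt | heq | hgt
  · exact absurd hnorm (mul_prod_lt_mul_prod _ (norm_nonneg w) hlt (fun j _ => norm_nonneg _)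
      fun j _ => norm_sub_lt_norm_one_sub_conj_mul_s8 (hr j) hlt).ne
  · exact heq
  · exact absurd hnorm (mul_prod_lt_mul_prod _ zero_le_one hgt (fun j _ => norm_nonneg _)
      fun j _ => norm_one_sub_conj_mul_lt_norm_sub (hr j) hgt).ne'
end

section
/- Composition of regular Blaschke products and polynomial factorization: if B_j(z) = z∏_{m=1}^{j-1}(z - a_m)/(1 - conj(a_m)z) with a_m ∈ 𝔻 and B_k(z) = zΦ_{k-1}(z)/Φ_{k-1}*(z) with Φ_{k-1} monic with zeros in 𝔻, then the composition B_j(B_k(z)) equals zΦ_{n-1}(z)/Φ_{n-1}*(z) where n = jk and Φ_{n-1}(z) = Φ_{k-1}(z)·∏_{m=1}^{j-1}(zΦ_{k-1}(z) - a_m Φ_{k-1}*(z)). -/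
/-! Writing `B_k = p / q` with `p = z Φ_{k-1}` and `q = Φ_{k-1}*`, each Möbius factor
`(w - a) / (1 - conj a · w)` of `B_j` evaluated at `w = p / q` becomes `(p - a q) / (q - conj a · p)`
after clearing the common denominator `q`; multiplying these factors gives the claimed quotient. -/

open Finset

theorem div_sub_div_one_sub_mul_div {K : Type*} [Field K] (p q a b : K) (hq : q ≠ 0) :
    (p / q - a) / (1 - b * (p / q)) = (p - a * q) / (q - b * p) := by
  rw [div_sub' hq, mul_div_assoc', one_sub_div hq, div_div_div_cancel_right₀ hq, mul_comm q a]

theorem div_mul_prod_div_sub_div {K ι : Type*} [Field K] [Fintype ι] (p q : K) (a b : ι → K)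
    (hq : q ≠ 0) :
    p / q * ∏ m, (p / q - a m) / (1 - b m * (p / q))
      = (p * ∏ m, (p - a m * q)) / (q * ∏ m, (q - b m * p)) := by
  simp only [div_sub_div_one_sub_mul_div _ _ _ _ hq, prod_div_distrib, div_mul_div_comm]

theorem stmt_9_general (J K : ℕ) (a : Fin J → ℂ)
    (r : Fin K → ℂ) (z : ℂ)
    (hPstar : (∏ i, (1 - (starRingEnd ℂ) (r i) * z)) ≠ 0) :
    (z * (∏ i, (z - r i)) / (∏ i, (1 - (starRingEnd ℂ) (r i) * z))) *
      ∏ m, ((z * (∏ i, (z - r i)) / (∏ i, (1 - (starRingEnd ℂ) (r i) * z))) - a m) /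
        (1 - (starRingEnd ℂ) (a m) *
          (z * (∏ i, (z - r i)) / (∏ i, (1 - (starRingEnd ℂ) (r i) * z))))
    = z * ((∏ i, (z - r i)) *
        ∏ m, (z * (∏ i, (z - r i)) - a m * ∏ i, (1 - (starRingEnd ℂ) (r i) * z))) /
      ((∏ i, (1 - (starRingEnd ℂ) (r i) * z)) *
        ∏ m, ((∏ i, (1 - (starRingEnd ℂ) (r i) * z)) -
          (starRingEnd ℂ) (a m) * (z * ∏ i, (z - r i)))) := by
  rw [div_mul_prod_div_sub_div _ _ _ _ hPstar, mul_assoc]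

theorem stmt_9 (J K : ℕ) (a : Fin J → ℂ) (ha : ∀ m, ‖a m‖ < 1)
    (r : Fin K → ℂ) (hr : ∀ i, ‖r i‖ < 1) (z : ℂ)
    (hPstar : (∏ i, (1 - (starRingEnd ℂ) (r i) * z)) ≠ 0)
    (hden : ∀ m, (∏ i, (1 - (starRingEnd ℂ) (r i) * z)) -
      (starRingEnd ℂ) (a m) * (z * ∏ i, (z - r i)) ≠ 0) :
    (z * (∏ i, (z - r i)) / (∏ i, (1 - (starRingEnd ℂ) (r i) * z))) *
      ∏ m, ((z * (∏ i, (z - r i)) / (∏ i, (1 - (starRingEnd ℂ) (r i) * z))) - a m) /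
        (1 - (starRingEnd ℂ) (a m) *
          (z * (∏ i, (z - r i)) / (∏ i, (1 - (starRingEnd ℂ) (r i) * z))))
    = z * ((∏ i, (z - r i)) *
        ∏ m, (z * (∏ i, (z - r i)) - a m * ∏ i, (1 - (starRingEnd ℂ) (r i) * z))) /
      ((∏ i, (1 - (starRingEnd ℂ) (r i) * z)) *
        ∏ m, ((∏ i, (1 - (starRingEnd ℂ) (r i) * z)) -
          (starRingEnd ℂ) (a m) * (z * ∏ i, (z - r i)))) :=
  stmt_9_general J K a r z hPstar
end

section
/- Let f_1, f_2, f_5 ∈ 𝔻 with f_1 f_2 f_5 ≠ 0, and set f_3 = (f_5 - f_2)/(1 - f_2 conj(f_5)) and f_4 = (f_5 - f_1)/(1 - f_1 conj(f_5)). If f_5(f_5-f_4)(f_5-f_3)/((1-conj(f_4)f_5)(1-conj(f_3)f_5)) = f_1 f_2 f_5, then (1 - conj(f_2)f_5)(1 - conj(f_1)f_5) is a real number. -/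
open Complex ComplexConjugate

/-
With `φ_a(z) = (z - a) / (1 - a z̄)`, one has `z - φ_a(z) = a (1 - |z|²) / (1 - a z̄)` and
`1 - conj(φ_a(z)) z = (1 - |z|²) / (1 - ā z)`, so the quotient of the two is `a · w_a / conj w_a` with
`w_a = 1 - ā z`. The hypothesis therefore says `w₁ w₂ / conj (w₁ w₂) = 1`, i.e. `w₁ w₂` is real.
-/

theorem one_sub_mul_conj_ne_zero {a b : ℂ} (ha : ‖a‖ < 1) (hb : ‖b‖ < 1) : 1 - a * conj b ≠ 0 := by
  have hlt : ‖a * conj b‖ < 1 := by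
    rw [norm_mul, norm_conj]
    exact mul_lt_one_of_nonneg_of_lt_one_left (norm_nonneg a) ha hb.le
  intro h
  rw [← sub_eq_zero.mp h, norm_one] at hlt
  exact hlt.false

theorem one_sub_conj_mul_ne_zero {a b : ℂ} (ha : ‖a‖ < 1) (hb : ‖b‖ < 1) : 1 - conj a * b ≠ 0 := by
  simpa [mul_comm] using one_sub_mul_conj_ne_zero hb ha

theorem sub_moebius_div_one_sub_conj_moebius_mul {a z : ℂ} (ha : ‖a‖ < 1) (hz : ‖z‖ < 1) :
    (z - (z - a) / (1 - a * conj z)) / (1 - conj ((z - a) / (1 - a * conj z)) * z) =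
      a * ((1 - conj a * z) / (1 - a * conj z)) := by
  have hd : 1 - a * conj z ≠ 0 := one_sub_mul_conj_ne_zero ha hz
  have hd' : 1 - conj a * z ≠ 0 := one_sub_conj_mul_ne_zero ha hz
  have hzz : 1 - z * conj z ≠ 0 := one_sub_mul_conj_ne_zero hz hz
  have hnum : z - (z - a) / (1 - a * conj z) = a * (1 - z * conj z) / (1 - a * conj z) := by
    field_simp
    ring
  have hden : 1 - conj ((z - a) / (1 - a * conj z)) * z = (1 - z * conj z) / (1 - conj a * z) := by
    simp only [map_div₀, map_sub, map_mul, map_one, conj_conj]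
    field_simp
    ring
  rw [hnum, hden]
  field_simp

theorem stmt_16 (f1 f2 f5 : ℂ) (h1 : ‖f1‖ < 1) (h2 : ‖f2‖ < 1)
    (h5 : ‖f5‖ < 1) (hne : f1 * f2 * f5 ≠ 0) :
    let f3 : ℂ := (f5 - f2) / (1 - f2 * (starRingEnd ℂ) f5)
    let f4 : ℂ := (f5 - f1) / (1 - f1 * (starRingEnd ℂ) f5)
    f5 * (f5 - f4) * (f5 - f3) /
        ((1 - (starRingEnd ℂ) f4 * f5) * (1 - (starRingEnd ℂ) f3 * f5)) = f1 * f2 * f5 →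
    ((1 - (starRingEnd ℂ) f2 * f5) * (1 - (starRingEnd ℂ) f1 * f5)).im = 0 := by
  intro f3 f4 h
  rw [mul_assoc, mul_div_assoc, ← div_mul_div_comm,
    sub_moebius_div_one_sub_conj_moebius_mul h1 h5,
    sub_moebius_div_one_sub_conj_moebius_mul h2 h5] at h
  have hratio : (1 - conj f1 * f5) / (1 - f1 * conj f5) * ((1 - conj f2 * f5) / (1 - f2 * conj f5)) =
      1 :=
    mul_left_cancel₀ hne (by linear_combination h)
  rw [div_mul_div_comm, div_eq_one_iff_eq
    (mul_ne_zero (one_sub_mul_conj_ne_zero h1 h5) (one_sub_mul_conj_ne_zero h2 h5))] at hratio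
  have hreal : conj ((1 - conj f2 * f5) * (1 - conj f1 * f5)) =
      (1 - conj f2 * f5) * (1 - conj f1 * f5) := by
    simp only [map_mul, map_sub, map_one, conj_conj]
    linear_combination -hratio
  exact conj_eq_iff_im.mp hreal
end
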